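/- arXiv:1612.04306 — 4 statements merged into one kernel-verified Lean document; each statement's English description precedes it below -/
import Mathlib

section
/- Let c : ℕ → ℂ be a higher order oscillating sequence of order 2 (stronger version). Let A ∈ GL(2, ℤ) be a matrix all of whose complex eigenvalues equal 1, or all of whose complex eigenvalues equal -1 (equivalently, the characteristic polynomial of A is (X-1)² or (X+1)²), and let a ∈ 𝕋² = ℝ²/ℤ² with a ≠ 0. Define the affine distal flow T : 𝕋² → 𝕋² by T(x) = Ax + a. Then c is linearly disjoint from T: for every continuous function f : 𝕋² → ℂ and every x ∈ 𝕋², (1/N) ∑_{n=1}^{N} c_n · f(Tⁿ x) → 0 as N → ∞. -/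
open Filter Polynomial

noncomputable section

/-- The `d`-torus `ℝ^d/ℤ^d`, as a product of copies of `ℝ/ℤ`. -/
abbrev Torus (d : ℕ) := Fin d → AddCircle (1 : ℝ)

/-- The affine map `x ↦ A x + a` on the `d`-torus, for an integer matrix `A`. -/
def torusAffine {d : ℕ} (A : Matrix (Fin d) (Fin d) ℤ) (a : Torus d) (x : Torus d) : Torus d :=
  fun i => (∑ j, A i j • x j) + a i

/-- `c` is a higher order oscillating sequence of order `m` (stronger version): for some
`λ > 1` the averages of `|c n|^λ` converge to a finite limit, and for every real-coefficient
polynomial `P` of degree at most `m` the averages of `c n · e^{2πi P(n)}` tend to `0`. -/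
def HigherOrderOscillating (c : ℕ → ℂ) (m : ℕ) : Prop :=
  (∃ lam : ℝ, 1 < lam ∧ ∃ K : ℝ,
    Tendsto (fun N : ℕ => (1 / N : ℝ) * ∑ n ∈ Finset.Icc 1 N, ‖c n‖ ^ lam) atTop (nhds K)) ∧
  ∀ P : Polynomial ℝ, P.degree ≤ m →
    Tendsto (fun N : ℕ => (1 / N : ℂ) * ∑ n ∈ Finset.Icc 1 N,
      c n * Complex.exp (2 * Real.pi * Complex.I * (P.eval (n : ℝ)))) atTop (nhds 0)

/-- `c` is linearly disjoint from the flow `T`: for every continuous `f : X → ℂ` and every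
`x ∈ X`, `(1/N) ∑_{n=1}^N c n · f(Tⁿ x) → 0` as `N → ∞`. -/
def LinearlyDisjoint {X : Type*} [TopologicalSpace X] (c : ℕ → ℂ) (T : X → X) : Prop :=
  ∀ f : X → ℂ, Continuous f → ∀ x : X,
    Tendsto (fun N : ℕ => (1 / N : ℂ) * ∑ n ∈ Finset.Icc 1 N, c n * f (T^[n] x)) atTop (nhds 0)

/-- e(t) = exp(2πit). -/
def eF (t : ℝ) : ℂ := Complex.exp (2 * Real.pi * Complex.I * t)

lemma eF_add (s t : ℝ) : eF (s + t) = eF s * eF t := by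
  rw [eF, eF, eF, ← Complex.exp_add]; push_cast; ring_nf

lemma eF_nat_div_two (n : ℕ) : eF ((n : ℝ) / 2) = (-1 : ℂ) ^ n := by
  rw [eF]
  have h : (2 * Real.pi * Complex.I * (((n:ℝ) / 2 : ℝ)) : ℂ) = n * (Real.pi * Complex.I) := by
    push_cast; ring
  rw [h, Complex.exp_nat_mul, Complex.exp_pi_mul_I]

/-- The key analytic lemma: averages of `c n * u n` tend to zero when `u` is given by
two polynomial phases according to parity. -/
lemma tendsto_avg_parity (c : ℕ → ℂ)
    (hc : ∀ P : Polynomial ℝ, P.degree ≤ 2 →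
      Tendsto (fun N : ℕ => (1 / N : ℂ) * ∑ n ∈ Finset.Icc 1 N,
        c n * Complex.exp (2 * Real.pi * Complex.I * (P.eval (n : ℝ)))) atTop (nhds 0))
    (P₀ P₁ : Polynomial ℝ) (h₀ : P₀.degree ≤ 2) (h₁ : P₁.degree ≤ 2)
    (u : ℕ → ℂ) (hu : ∀ n, u n = if Even n then eF (P₀.eval n) else eF (P₁.eval n)) :
    Tendsto (fun N : ℕ => (1 / N : ℂ) * ∑ n ∈ Finset.Icc 1 N, c n * u n) atTop (nhds 0) := by
  have hc' : ∀ P : Polynomial ℝ, P.degree ≤ 2 →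
      Tendsto (fun N : ℕ => (1 / N : ℂ) * ∑ n ∈ Finset.Icc 1 N, c n * eF (P.eval n))
        atTop (nhds 0) := fun P hP => hc P hP
  set Q₀ : Polynomial ℝ := P₀ + C (1/2 : ℝ) * X with hQ₀def
  set Q₁ : Polynomial ℝ := P₁ + C (1/2 : ℝ) * X with hQ₁def
  have hdegX : (C (1/2 : ℝ) * X).degree ≤ 2 := by compute_degree; norm_num
  have hQ₀ : Q₀.degree ≤ 2 := (degree_add_le _ _).trans (max_le h₀ hdegX)
  have hQ₁ : Q₁.degree ≤ 2 := (degree_add_le _ _).trans (max_le h₁ hdegX)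
  have hkey : ∀ n : ℕ, c n * u n =
      (1/2 : ℂ) * (c n * eF (P₀.eval n)) + (1/2) * (c n * eF (Q₀.eval n)) +
      ((1/2) * (c n * eF (P₁.eval n)) - (1/2) * (c n * eF (Q₁.eval n))) := by
    intro n
    have hev : ∀ (P : Polynomial ℝ), eF ((P + C (1/2:ℝ) * X).eval n) = eF (P.eval n) * (-1:ℂ)^n := by
      intro P
      rw [eval_add, eval_mul, eval_C, eval_X, ← eF_nat_div_two n, ← eF_add]
      congr 1; ring
    rw [hu n]
    rcases Nat.even_or_odd n with he | ho
    · rw [if_pos he, hQ₀def, hQ₁def, hev, hev, he.neg_one_pow]; ring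
    · rw [if_neg (Nat.not_even_iff_odd.mpr ho), hQ₀def, hQ₁def, hev, hev, ho.neg_one_pow]; ring
  have heq : (fun N : ℕ => (1 / N : ℂ) * ∑ n ∈ Finset.Icc 1 N, c n * u n) =
      fun N : ℕ =>
        (1/2 : ℂ) * ((1 / N : ℂ) * ∑ n ∈ Finset.Icc 1 N, c n * eF (P₀.eval n)) +
        (1/2) * ((1 / N : ℂ) * ∑ n ∈ Finset.Icc 1 N, c n * eF (Q₀.eval n)) +
        ((1/2) * ((1 / N : ℂ) * ∑ n ∈ Finset.Icc 1 N, c n * eF (P₁.eval n)) -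
         (1/2) * ((1 / N : ℂ) * ∑ n ∈ Finset.Icc 1 N, c n * eF (Q₁.eval n))) := by
    funext N
    simp only [hkey]
    rw [Finset.sum_add_distrib, Finset.sum_add_distrib, Finset.sum_sub_distrib,
      ← Finset.mul_sum, ← Finset.mul_sum, ← Finset.mul_sum, ← Finset.mul_sum]
    ring
  rw [heq]
  have := (((hc' P₀ h₀).const_mul (1/2:ℂ)).add ((hc' Q₀ hQ₀).const_mul (1/2:ℂ))).add
    (((hc' P₁ h₁).const_mul (1/2:ℂ)).sub ((hc' Q₁ hQ₁).const_mul (1/2:ℂ)))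
  simpa using this



lemma matrix_pow_aux (ε : ℝ) (hε : ε ^ 2 = 1) (E : Matrix (Fin 2) (Fin 2) ℝ)
    (hEE : E * E = 0) (n : ℕ) :
    (ε • 1 + E) ^ n = (ε ^ n) • (1 : Matrix (Fin 2) (Fin 2) ℝ) + ((n : ℝ) * ε ^ (n + 1)) • E := by
  induction n with
  | zero => simp
  | succ n ih =>
    rw [pow_succ, ih]
    simp only [add_mul, mul_add, smul_mul_assoc, mul_smul_comm, one_mul, mul_one, hEE,
      smul_zero, add_zero, smul_smul]
    match_scalars
    · ring
    · linear_combination (-(ε:ℝ) ^ n) * hε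

lemma matrix_pow_formula (B : Matrix (Fin 2) (Fin 2) ℝ) (ε : ℝ) (hε : ε ^ 2 = 1)
    (hB : (B - ε • 1) ^ 2 = 0) (n : ℕ) :
    B ^ n = (ε ^ n) • (1 : Matrix (Fin 2) (Fin 2) ℝ) + ((n : ℝ) * ε ^ (n + 1)) • (B - ε • 1) := by
  have hEE : (B - ε • 1) * (B - ε • 1) = 0 := by rw [← sq]; exact hB
  have hBeq : B = ε • 1 + (B - ε • 1) := by abel
  calc B ^ n = (ε • 1 + (B - ε • 1)) ^ n := by rw [← hBeq]
  _ = _ := matrix_pow_aux ε hε _ hEE n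

lemma matrix_geom_formula (B : Matrix (Fin 2) (Fin 2) ℝ) (ε : ℝ) (hε : ε ^ 2 = 1)
    (hB : (B - ε • 1) ^ 2 = 0) (n : ℕ) :
    ∑ k ∈ Finset.range n, B ^ k =
      (∑ k ∈ Finset.range n, ε ^ k) • (1 : Matrix (Fin 2) (Fin 2) ℝ) +
      (∑ k ∈ Finset.range n, (k : ℝ) * ε ^ (k + 1)) • (B - ε • 1) := by
  rw [Finset.sum_congr rfl (fun k _ => matrix_pow_formula B ε hε hB k),
    Finset.sum_add_distrib, ← Finset.sum_smul, ← Finset.sum_smul]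

lemma sum_pow_one (n : ℕ) : ∑ k ∈ Finset.range n, (1:ℝ) ^ k = (n : ℝ) := by simp

lemma sum_id_real (n : ℕ) : ∑ k ∈ Finset.range n, (k : ℝ) = (n : ℝ) * ((n : ℝ) - 1) / 2 := by
  induction n with
  | zero => simp
  | succ n ih => rw [Finset.sum_range_succ, ih]; push_cast; ring

lemma sum_neg_one_pow (n : ℕ) :
    ∑ k ∈ Finset.range n, (-1:ℝ) ^ k = (1 - (-1:ℝ) ^ n) / 2 := by
  induction n with
  | zero => simp
  | succ n ih => rw [Finset.sum_range_succ, ih, pow_succ]; ring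

lemma sum_mul_neg_one_pow (n : ℕ) :
    ∑ k ∈ Finset.range n, (k : ℝ) * (-1:ℝ) ^ (k + 1) = ((-1:ℝ) ^ n * (2 * n - 1) + 1) / 4 := by
  induction n with
  | zero => norm_num
  | succ n ih =>
    rw [Finset.sum_range_succ, ih, pow_succ]
    push_cast; ring

section TorusLift

/-- The additive hom from ℝ^2 to the 2-torus. -/
def torusProj (v : Fin 2 → ℝ) : Torus 2 := fun i => (v i : AddCircle (1:ℝ))

lemma torusProj_sum {ι : Type*} (s : Finset ι) (g : ι → ℝ) :
    ((∑ j ∈ s, g j : ℝ) : AddCircle (1:ℝ)) = ∑ j ∈ s, (g j : AddCircle (1:ℝ)) :=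
  map_sum (QuotientAddGroup.mk' (AddSubgroup.zmultiples (1:ℝ))) g s

lemma torusAffine_proj (A : Matrix (Fin 2) (Fin 2) ℤ) (b v : Fin 2 → ℝ) :
    torusAffine A (torusProj b) (torusProj v) =
      torusProj ((A.map (Int.cast : ℤ → ℝ)).mulVec v + b) := by
  funext i
  simp only [torusAffine, torusProj, Pi.add_apply]
  rw [AddCircle.coe_add]
  congr 1
  rw [Matrix.mulVec, dotProduct]
  rw [show (∑ j, A i j • ((v j : ℝ) : AddCircle (1:ℝ))) =
      ∑ j, (((A i j : ℝ) * v j : ℝ) : AddCircle (1:ℝ)) from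
    Finset.sum_congr rfl fun j _ => by
      rw [← QuotientAddGroup.mk_zsmul]
      norm_num [zsmul_eq_mul]]
  rw [← torusProj_sum]
  norm_num [Matrix.map_apply]

lemma torusAffine_iterate (A : Matrix (Fin 2) (Fin 2) ℤ) (b v : Fin 2 → ℝ) (n : ℕ) :
    (torusAffine A (torusProj b))^[n] (torusProj v) =
      torusProj (((A.map (Int.cast : ℤ → ℝ)) ^ n).mulVec v +
        (∑ k ∈ Finset.range n, (A.map (Int.cast : ℤ → ℝ)) ^ k).mulVec b) := by
  set B := A.map (Int.cast : ℤ → ℝ) with hB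
  induction n with
  | zero => simp [Matrix.one_mulVec]
  | succ n ih =>
    rw [Function.iterate_succ_apply', ih, torusAffine_proj]
    congr 1
    rw [Matrix.mulVec_add, Matrix.mulVec_mulVec, ← pow_succ', Matrix.mulVec_mulVec]
    rw [geom_sum_succ, Matrix.add_mulVec, Matrix.one_mulVec]
    abel

end TorusLift

section Chars

/-- The character of the 2-torus with frequency `k`. -/
def torusChar (k : Fin 2 → ℤ) : C(Torus 2, ℂ) :=
  ∏ i, (fourier (k i)).comp ⟨fun x => x i, continuous_apply i⟩

lemma torusChar_apply (k : Fin 2 → ℤ) (x : Torus 2) :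
    torusChar k x = ∏ i, fourier (k i) (x i) := by
  rw [torusChar, ContinuousMap.prod_apply]; rfl

lemma torusChar_zero : torusChar 0 = 1 := by
  ext x
  rw [torusChar_apply]
  simp [fourier_zero]

lemma torusChar_mul (k l : Fin 2 → ℤ) : torusChar k * torusChar l = torusChar (k + l) := by
  ext x
  rw [ContinuousMap.mul_apply, torusChar_apply, torusChar_apply, torusChar_apply,
    ← Finset.prod_mul_distrib]
  exact Finset.prod_congr rfl fun i _ => (fourier_add (m := k i) (n := l i) (x := x i)).symm

lemma torusChar_star (k : Fin 2 → ℤ) : star (torusChar k) = torusChar (-k) := by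
  ext x
  rw [ContinuousMap.star_apply, torusChar_apply, torusChar_apply, star_prod]
  refine Finset.prod_congr rfl fun i _ => ?_
  rw [Pi.neg_apply, fourier_neg, Complex.star_def]

lemma torusChar_proj (k : Fin 2 → ℤ) (v : Fin 2 → ℝ) :
    torusChar k (torusProj v) = eF (∑ i, (k i : ℝ) * v i) := by
  rw [torusChar_apply]
  have : ∀ i : Fin 2, fourier (k i) ((torusProj v) i) = eF ((k i : ℝ) * v i) := by
    intro i
    rw [torusProj, fourier_coe_apply, eF]
    push_cast
    rw [div_one]
    ring_nf
  rw [Finset.prod_congr rfl fun i _ => this i]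
  simp only [eF]
  rw [← Complex.exp_sum]
  congr 1
  push_cast
  rw [Finset.mul_sum]

lemma torusChar_sep (x y : Torus 2) (h : x ≠ y) :
    ∃ k : Fin 2 → ℤ, torusChar k x ≠ torusChar k y := by
  have : ∃ i, x i ≠ y i := by
    by_contra hc
    push_neg at hc
    exact h (funext hc)
  obtain ⟨i, hi⟩ := this
  refine ⟨Pi.single i 1, ?_⟩
  have key : ∀ z : Torus 2, torusChar (Pi.single i 1) z = fourier 1 (z i) := by
    intro z
    rw [torusChar_apply]
    rw [Finset.prod_eq_single i (fun j _ hj => by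
      rw [Pi.single_eq_of_ne hj, fourier_zero]) (fun hmem => absurd (Finset.mem_univ i) hmem)]
    rw [Pi.single_eq_same]
  rw [key, key]
  intro hcontra
  apply hi
  have h1 : AddCircle.toCircle (x i) = AddCircle.toCircle (y i) := by
    have := hcontra
    rw [fourier_one, fourier_one] at this
    exact_mod_cast Subtype.coe_injective this
  exact AddCircle.injective_toCircle one_ne_zero h1

end Chars

section OrbitPoly

lemma psi_lin (k : Fin 2 → ℤ) (c₁ c₂ c₃ c₄ : ℝ) (w₁ w₂ w₃ w₄ : Fin 2 → ℝ) :
    ∑ i, (k i : ℝ) * ((c₁ • w₁ + c₂ • w₂) + (c₃ • w₃ + c₄ • w₄)) i =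
      c₁ * (∑ i, (k i : ℝ) * w₁ i) + c₂ * (∑ i, (k i : ℝ) * w₂ i) +
      c₃ * (∑ i, (k i : ℝ) * w₃ i) + c₄ * (∑ i, (k i : ℝ) * w₄ i) := by
  simp only [Pi.add_apply, Pi.smul_apply, smul_eq_mul, mul_add, Finset.sum_add_distrib,
    Finset.mul_sum]
  rw [Finset.sum_congr rfl (fun i (_ : i ∈ Finset.univ) =>
    (by ring : (k i : ℝ) * (c₁ * w₁ i) = c₁ * ((k i : ℝ) * w₁ i)))]
  rw [Finset.sum_congr rfl (fun i (_ : i ∈ Finset.univ) =>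
    (by ring : (k i : ℝ) * (c₂ * w₂ i) = c₂ * ((k i : ℝ) * w₂ i)))]
  rw [Finset.sum_congr rfl (fun i (_ : i ∈ Finset.univ) =>
    (by ring : (k i : ℝ) * (c₃ * w₃ i) = c₃ * ((k i : ℝ) * w₃ i)))]
  rw [Finset.sum_congr rfl (fun i (_ : i ∈ Finset.univ) =>
    (by ring : (k i : ℝ) * (c₄ * w₄ i) = c₄ * ((k i : ℝ) * w₄ i)))]
  ring

lemma exists_parity_polys (A : Matrix (Fin 2) (Fin 2) ℤ)
    (hEig : A.charpoly = (X - 1) ^ 2 ∨ A.charpoly = (X + 1) ^ 2)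
    (b v : Fin 2 → ℝ) (k : Fin 2 → ℤ) :
    ∃ P₀ P₁ : Polynomial ℝ, P₀.degree ≤ 2 ∧ P₁.degree ≤ 2 ∧ ∀ n : ℕ,
      torusChar k ((torusAffine A (torusProj b))^[n] (torusProj v)) =
        if Even n then eF (P₀.eval n) else eF (P₁.eval n) := by
  classical
  set B := A.map (Int.cast : ℤ → ℝ) with hBdef
  -- Cayley-Hamilton consequence
  have hCH : ∀ ε : ℤ, A.charpoly = (X - C ε) ^ 2 → (B - (ε : ℝ) • 1) ^ 2 = 0 := by
    intro ε hchar
    have h0 : (A - ε • 1) ^ 2 = 0 := by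
      have := Matrix.aeval_self_charpoly A
      rw [hchar] at this
      simpa [zsmul_eq_mul, Algebra.algebraMap_self, map_pow, map_sub, aeval_X, aeval_C] using this
    have hbase : (((Int.castRingHom ℝ).mapMatrix : Matrix (Fin 2) (Fin 2) ℤ →+* _) (A - ε • 1)) =
        B - (ε : ℝ) • 1 := by
      rw [map_sub, map_zsmul, map_one]
      ext i j
      simp [RingHom.mapMatrix_apply, Matrix.map_apply, Matrix.sub_apply, Matrix.smul_apply,
        Matrix.one_apply, hBdef]
      split <;> simp [← Matrix.diagonal_intCast (n := Fin 2) (α := ℝ) ε, Matrix.diagonal_apply] <;>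
        simp_all
    have h2 := congrArg ((Int.castRingHom ℝ).mapMatrix : Matrix (Fin 2) (Fin 2) ℤ →+* _) h0
    rw [map_pow, hbase, map_zero] at h2
    exact h2
  -- choose ε
  obtain ⟨ε, hε1, hB2⟩ : ∃ ε : ℝ, ε ^ 2 = 1 ∧ ((B - ε • 1) ^ 2 = 0 ∧ (ε = 1 ∨ ε = -1)) := by
    rcases hEig with h | h
    · exact ⟨1, by norm_num, by simpa using hCH 1 (by simpa using h), Or.inl rfl⟩
    · exact ⟨-1, by norm_num, by simpa using hCH (-1) (by simpa using h), Or.inr rfl⟩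
  obtain ⟨hB2, hεval⟩ := hB2
  set E := B - ε • 1 with hEdef
  -- the scalar data
  set α := ∑ i, (k i : ℝ) * v i with hα
  set β := ∑ i, (k i : ℝ) * (E.mulVec v) i with hβ
  set γ := ∑ i, (k i : ℝ) * b i with hγ
  set δ := ∑ i, (k i : ℝ) * (E.mulVec b) i with hδ
  -- the value of the character along the orbit
  have horbit : ∀ n : ℕ,
      torusChar k ((torusAffine A (torusProj b))^[n] (torusProj v)) =
        eF ((ε ^ n) * α + ((n : ℝ) * ε ^ (n + 1)) * β +
          (∑ j ∈ Finset.range n, ε ^ j) * γ + (∑ j ∈ Finset.range n, (j : ℝ) * ε ^ (j + 1)) * δ) := by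
    intro n
    rw [torusAffine_iterate, torusChar_proj]
    congr 1
    rw [matrix_pow_formula B ε hε1 hB2 n, matrix_geom_formula B ε hε1 hB2 n]
    rw [Matrix.add_mulVec, Matrix.add_mulVec, Matrix.smul_mulVec, Matrix.smul_mulVec,
      Matrix.smul_mulVec, Matrix.smul_mulVec, Matrix.one_mulVec, Matrix.one_mulVec]
    rw [psi_lin]
  rcases hεval with rfl | rfl
  · -- eigenvalue 1
    refine ⟨C α + (C β + C γ) * X + C (δ/2) * (X ^ 2 - X),
            C α + (C β + C γ) * X + C (δ/2) * (X ^ 2 - X), ?_, ?_, ?_⟩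
    · compute_degree
    · compute_degree
    · intro n
      rw [ite_self, horbit n, sum_pow_one]
      rw [show (∑ j ∈ Finset.range n, (j:ℝ) * (1:ℝ) ^ (j+1)) = ∑ j ∈ Finset.range n, (j:ℝ) by
        exact Finset.sum_congr rfl fun j _ => by rw [one_pow, mul_one], sum_id_real]
      congr 1
      simp only [eval_add, eval_mul, eval_C, eval_X, eval_sub, eval_pow, one_pow]
      ring
  · -- eigenvalue -1
    refine ⟨C α + (C (δ/2) - C β) * X, C (-α + γ + δ/2) + (C β - C (δ/2)) * X, ?_, ?_, ?_⟩
    · compute_degree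
      norm_num
    · compute_degree
      norm_num
    · intro n
      rw [horbit n, sum_neg_one_pow, sum_mul_neg_one_pow]
      rcases Nat.even_or_odd n with he | ho
      · rw [if_pos he, he.neg_one_pow, (by simpa using he.add_one.neg_one_pow :
          ((-1:ℝ)) ^ (n+1) = -1)]
        congr 1
        simp only [eval_add, eval_mul, eval_C, eval_X, eval_sub]
        ring
      · rw [if_neg (Nat.not_even_iff_odd.mpr ho), ho.neg_one_pow, (by
          simpa using (ho.add_one).neg_one_pow : ((-1:ℝ)) ^ (n+1) = 1)]
        congr 1
        simp only [eval_add, eval_mul, eval_C, eval_X, eval_sub, eval_neg]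
        ring

end OrbitPoly

section Analysis

lemma avg_norm_bound (c : ℕ → ℂ) (lam : ℝ) (hlam : 1 < lam) (K : ℝ)
    (hK : Tendsto (fun N : ℕ => (1 / N : ℝ) * ∑ n ∈ Finset.Icc 1 N, ‖c n‖ ^ lam)
      atTop (nhds K)) :
    ∃ D : ℝ, 0 < D ∧ ∀ᶠ N : ℕ in atTop, (1 / N : ℝ) * ∑ n ∈ Finset.Icc 1 N, ‖c n‖ ≤ D := by
  refine ⟨max (K + 2) 1, lt_of_lt_of_le one_pos (le_max_right _ _), ?_⟩
  have hev : ∀ᶠ N : ℕ in atTop, (1 / N : ℝ) * ∑ n ∈ Finset.Icc 1 N, ‖c n‖ ^ lam < K + 1 :=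
    hK.eventually_lt_const (lt_add_one K)
  filter_upwards [hev, eventually_ge_atTop 1] with N hN hN1
  have hNpos : (0:ℝ) < N := by exact_mod_cast hN1
  have hterm : ∀ n : ℕ, ‖c n‖ ≤ 1 + ‖c n‖ ^ lam := by
    intro n
    rcases le_total ‖c n‖ 1 with h | h
    · exact h.trans (le_add_of_nonneg_right (Real.rpow_nonneg (norm_nonneg _) _))
    · calc ‖c n‖ = ‖c n‖ ^ (1:ℝ) := (Real.rpow_one _).symm
      _ ≤ ‖c n‖ ^ lam := Real.rpow_le_rpow_of_exponent_le h hlam.le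
      _ ≤ 1 + ‖c n‖ ^ lam := le_add_of_nonneg_left one_pos.le
  have hsum : ∑ n ∈ Finset.Icc 1 N, ‖c n‖ ≤ (N : ℝ) + ∑ n ∈ Finset.Icc 1 N, ‖c n‖ ^ lam := by
    calc ∑ n ∈ Finset.Icc 1 N, ‖c n‖ ≤ ∑ n ∈ Finset.Icc 1 N, (1 + ‖c n‖ ^ lam) :=
      Finset.sum_le_sum fun n _ => hterm n
    _ = (N : ℝ) + ∑ n ∈ Finset.Icc 1 N, ‖c n‖ ^ lam := by
      rw [Finset.sum_add_distrib, Finset.sum_const, Nat.card_Icc]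
      simp [hN1]
  have h1N : (0:ℝ) < 1 / N := by positivity
  calc (1 / N : ℝ) * ∑ n ∈ Finset.Icc 1 N, ‖c n‖
      ≤ (1 / N : ℝ) * ((N : ℝ) + ∑ n ∈ Finset.Icc 1 N, ‖c n‖ ^ lam) := by
        exact mul_le_mul_of_nonneg_left hsum h1N.le
    _ = 1 + (1 / N : ℝ) * ∑ n ∈ Finset.Icc 1 N, ‖c n‖ ^ lam := by
        field_simp
    _ ≤ 1 + (K + 1) := by linarith [hN]
    _ ≤ max (K + 2) 1 := by rw [show (1:ℝ) + (K+1) = K + 2 by ring]; exact le_max_left _ _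

lemma good_mem_closure (c : ℕ → ℂ) (D : ℝ) (hD : 0 < D)
    (hbd : ∀ᶠ N : ℕ in atTop, (1 / N : ℝ) * ∑ n ∈ Finset.Icc 1 N, ‖c n‖ ≤ D)
    (T : Torus 2 → Torus 2) (S : Set C(Torus 2, ℂ))
    (hS : ∀ g ∈ S, ∀ y : Torus 2,
      Tendsto (fun N : ℕ => (1 / N : ℂ) * ∑ n ∈ Finset.Icc 1 N, c n * g (T^[n] y))
        atTop (nhds 0))
    (f : C(Torus 2, ℂ)) (hf : f ∈ closure S) (y : Torus 2) :
    Tendsto (fun N : ℕ => (1 / N : ℂ) * ∑ n ∈ Finset.Icc 1 N, c n * f (T^[n] y))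
      atTop (nhds 0) := by
  rw [NormedAddCommGroup.tendsto_nhds_zero]
  intro ε hε
  have hδ : 0 < ε / (2 * D) := by positivity
  obtain ⟨g, hgS, hdist⟩ := Metric.mem_closure_iff.mp hf (ε / (2 * D)) hδ
  have hg := hS g hgS y
  rw [NormedAddCommGroup.tendsto_nhds_zero] at hg
  filter_upwards [hg (ε/2) (by positivity), hbd, eventually_ge_atTop 1] with N hgN hbdN hN1
  have hNpos : (0:ℝ) < N := by exact_mod_cast hN1
  -- the difference estimate
  have hdiff : ‖(1 / N : ℂ) * ∑ n ∈ Finset.Icc 1 N, c n * f (T^[n] y) -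
      (1 / N : ℂ) * ∑ n ∈ Finset.Icc 1 N, c n * g (T^[n] y)‖ ≤ ε / 2 := by
    rw [← mul_sub, ← Finset.sum_sub_distrib]
    rw [show (∑ n ∈ Finset.Icc 1 N, (c n * f (T^[n] y) - c n * g (T^[n] y))) =
        ∑ n ∈ Finset.Icc 1 N, c n * (f (T^[n] y) - g (T^[n] y)) from
      Finset.sum_congr rfl fun n _ => by ring]
    have hnorm1N : ‖(1 / N : ℂ)‖ = 1 / (N:ℝ) := by
      rw [norm_div, norm_one, Complex.norm_natCast]
    calc ‖(1 / N : ℂ) * ∑ n ∈ Finset.Icc 1 N, c n * (f (T^[n] y) - g (T^[n] y))‖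
        = (1/(N:ℝ)) * ‖∑ n ∈ Finset.Icc 1 N, c n * (f (T^[n] y) - g (T^[n] y))‖ := by
          rw [norm_mul, hnorm1N]
      _ ≤ (1/(N:ℝ)) * ∑ n ∈ Finset.Icc 1 N, ‖c n‖ * (ε / (2*D)) := by
          refine mul_le_mul_of_nonneg_left ?_ (by positivity)
          refine (norm_sum_le _ _).trans (Finset.sum_le_sum fun n _ => ?_)
          rw [norm_mul]
          refine mul_le_mul_of_nonneg_left ?_ (norm_nonneg _)
          have := ContinuousMap.dist_apply_le_dist (f := f) (g := g) (T^[n] y)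
          calc ‖f (T^[n] y) - g (T^[n] y)‖ = dist (f (T^[n] y)) (g (T^[n] y)) := by
                rw [dist_eq_norm]
            _ ≤ dist f g := ContinuousMap.dist_apply_le_dist _
            _ ≤ ε / (2*D) := hdist.le
      _ = (ε / (2*D)) * ((1/(N:ℝ)) * ∑ n ∈ Finset.Icc 1 N, ‖c n‖) := by
          rw [← Finset.sum_mul]; ring
      _ ≤ (ε / (2*D)) * D := mul_le_mul_of_nonneg_left hbdN hδ.le
      _ = ε / 2 := by field_simp
  calc ‖(1 / N : ℂ) * ∑ n ∈ Finset.Icc 1 N, c n * f (T^[n] y)‖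
      ≤ ‖(1 / N : ℂ) * ∑ n ∈ Finset.Icc 1 N, c n * g (T^[n] y)‖ +
        ‖(1 / N : ℂ) * ∑ n ∈ Finset.Icc 1 N, c n * f (T^[n] y) -
          (1 / N : ℂ) * ∑ n ∈ Finset.Icc 1 N, c n * g (T^[n] y)‖ := by
        exact norm_le_insert' _ _
    _ < ε/2 + ε/2 := by
        have := add_lt_add_of_lt_of_le hgN hdiff
        linarith
    _ = ε := by ring

end Analysis

/-- Any higher order oscillating sequence of order 2 (stronger version) is linearly disjoint
from every affine distal flow `T x = A x + a` on the 2-torus, i.e. `A ∈ GL(2,ℤ)` with all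
complex eigenvalues equal to 1 (charpoly `(X-1)²`) or all equal to -1 (charpoly `(X+1)²`),
and `a ≠ 0`. -/
theorem higherOrderOscillating_linearlyDisjoint_affineDistal_torus2
    (c : ℕ → ℂ) (hc : HigherOrderOscillating c 2)
    (A : Matrix (Fin 2) (Fin 2) ℤ) (hA : IsUnit A.det)
    (hEig : A.charpoly = (X - 1) ^ 2 ∨ A.charpoly = (X + 1) ^ 2)
    (a : Torus 2) (ha : a ≠ 0) :
    LinearlyDisjoint c (torusAffine A a) := by
  classical
  obtain ⟨⟨lam, hlam, K, hK⟩, hosc⟩ := hc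
  obtain ⟨D, hD, hbd⟩ := avg_norm_bound c lam hlam K hK
  intro f hf x
  choose b hb using fun i => QuotientAddGroup.mk_surjective (a i)
  have haproj : a = torusProj b := by funext i; exact (hb i).symm
  set T := torusAffine A a with hT
  set S : Set C(Torus 2, ℂ) := {g | ∀ y : Torus 2,
    Tendsto (fun N : ℕ => (1 / N : ℂ) * ∑ n ∈ Finset.Icc 1 N, c n * g (T^[n] y))
      atTop (nhds 0)} with hSdef
  have hchar : ∀ k : Fin 2 → ℤ, torusChar k ∈ S := by
    intro k y
    choose v hv using fun i => QuotientAddGroup.mk_surjective (y i)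
    have hyproj : y = torusProj v := by funext i; exact (hv i).symm
    obtain ⟨P₀, P₁, h₀, h₁, hform⟩ := exists_parity_polys A hEig b v k
    refine tendsto_avg_parity c (fun P hP => hosc P (by exact_mod_cast hP)) P₀ P₁ h₀ h₁
      (fun n => torusChar k (T^[n] y)) (fun n => ?_)
    rw [hT, haproj, hyproj]
    exact hform n
  -- S is a submodule
  have hSzero : (0 : C(Torus 2, ℂ)) ∈ S := by
    intro y
    simp only [ContinuousMap.zero_apply, mul_zero, Finset.sum_const_zero]
    exact tendsto_const_nhds
  have hSadd : ∀ {g h : C(Torus 2, ℂ)}, g ∈ S → h ∈ S → g + h ∈ S := by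
    intro g h hg hh y
    have heq : (fun N : ℕ => (1 / N : ℂ) * ∑ n ∈ Finset.Icc 1 N, c n * (g + h) (T^[n] y)) =
        (fun N : ℕ => (1 / N : ℂ) * ∑ n ∈ Finset.Icc 1 N, c n * g (T^[n] y) +
          (1 / N : ℂ) * ∑ n ∈ Finset.Icc 1 N, c n * h (T^[n] y)) := by
      funext N
      rw [← mul_add, ← Finset.sum_add_distrib]
      congr 1
      exact Finset.sum_congr rfl fun n _ => by
        rw [ContinuousMap.add_apply]; ring
    rw [heq]
    simpa using (hg y).add (hh y)
  have hSsmul : ∀ (r : ℂ) {g : C(Torus 2, ℂ)}, g ∈ S → r • g ∈ S := by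
    intro r g hg y
    have heq : (fun N : ℕ => (1 / N : ℂ) * ∑ n ∈ Finset.Icc 1 N, c n * (r • g) (T^[n] y)) =
        (fun N : ℕ => r * ((1 / N : ℂ) * ∑ n ∈ Finset.Icc 1 N, c n * g (T^[n] y))) := by
      funext N
      rw [show (∑ n ∈ Finset.Icc 1 N, c n * (r • g) (T^[n] y)) =
          r * ∑ n ∈ Finset.Icc 1 N, c n * g (T^[n] y) by
        rw [Finset.mul_sum]
        exact Finset.sum_congr rfl fun n _ => by
          rw [ContinuousMap.smul_apply, smul_eq_mul]; ring]
      ring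
    rw [heq]
    simpa using (hg y).const_mul r
  let GoodSub : Submodule ℂ C(Torus 2, ℂ) :=
    { carrier := S
      add_mem' := hSadd
      zero_mem' := hSzero
      smul_mem' := hSsmul }
  set chars : Set C(Torus 2, ℂ) := Set.range torusChar with hcharsdef
  let M : Submonoid C(Torus 2, ℂ) :=
    { carrier := chars
      one_mem' := ⟨0, torusChar_zero⟩
      mul_mem' := by rintro f' g' ⟨k, rfl⟩ ⟨l, rfl⟩; exact ⟨k + l, (torusChar_mul k l).symm⟩ }
  have hadjoin_sub : (StarAlgebra.adjoin ℂ chars : Set C(Torus 2, ℂ)) ⊆ S := by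
    intro g hg
    have hstar : chars ∪ star chars = chars := by
      apply Set.union_eq_self_of_subset_right
      intro g' hg'
      rw [Set.mem_star] at hg'
      obtain ⟨k, hk⟩ := hg'
      refine ⟨-k, ?_⟩
      rw [← torusChar_star, hk, star_star]
    have h1 : g ∈ Subalgebra.toSubmodule (Algebra.adjoin ℂ (chars ∪ star chars)) :=
      (Subalgebra.mem_toSubmodule _).mpr hg
    rw [hstar, Algebra.adjoin_eq_span] at h1
    have hmono : (Submonoid.closure chars : Set C(Torus 2, ℂ)) ⊆ S := by
      intro g' hg'
      have hM : g' ∈ M := Submonoid.closure_le.mpr (fun z hz => hz) hg'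
      obtain ⟨k, rfl⟩ := hM
      exact hchar k
    exact Submodule.span_le.mpr (show (Submonoid.closure chars : Set C(Torus 2, ℂ)) ⊆ GoodSub
      from hmono) h1
  have hsep : (StarAlgebra.adjoin ℂ chars).SeparatesPoints := by
    intro z w hzw
    obtain ⟨k, hk⟩ := torusChar_sep z w hzw
    exact ⟨⇑(torusChar k), ⟨torusChar k,
      StarAlgebra.subset_adjoin ℂ chars ⟨k, rfl⟩, rfl⟩, hk⟩
  have htop := ContinuousMap.starSubalgebra_topologicalClosure_eq_top_of_separatesPoints _ hsep
  have hmemclos : (⟨f, hf⟩ : C(Torus 2, ℂ)) ∈ closure (StarAlgebra.adjoin ℂ chars : Set C(Torus 2, ℂ)) := by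
    have : (⟨f, hf⟩ : C(Torus 2, ℂ)) ∈ (StarAlgebra.adjoin ℂ chars).topologicalClosure := by
      rw [htop]; trivial
    exact this
  have hclosS : (⟨f, hf⟩ : C(Torus 2, ℂ)) ∈ closure S := closure_mono hadjoin_sub hmemclos
  exact good_mem_closure c D hD hbd T S (fun g hg => hg) ⟨f, hf⟩ hclosS x
end
end

section
/- Let d ≥ 2 be an integer and let c : ℕ → ℂ be a higher order oscillating sequence of order d (stronger version). Let A ∈ GL(d, ℤ) be a matrix all of whose complex eigenvalues equal 1, or all of whose complex eigenvalues equal -1 (equivalently, the characteristic polynomial of A is (X-1)^d or (X+1)^d), and let a ∈ 𝕋^d = ℝ^d/ℤ^d with a ≠ 0. Define the affine distal flow T : 𝕋^d → 𝕋^d by T(x) = Ax + a. Then c is linearly disjoint from T: for every continuous function f : 𝕋^d → ℂ and every x ∈ 𝕋^d, (1/N) ∑_{n=1}^{N} c_n · f(Tⁿ x) → 0 as N → ∞. -/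
open Filter Polynomial

noncomputable section

/-! Lift `x` and `a` to `ℝ^d`: the orbit becomes `F n = S^[n] x̃` with `S w = A w + ã`. By
Cayley–Hamilton `(A² - 1)^d = 0`, so the `(d+1)`-st forward difference of step `2` of `F`
vanishes and, on even and on odd times separately, every character `e(k · F n)` is a polynomial
phase of degree `≤ d`. Writing the parity indicators as `(1 ± (-1)^n) / 2` with
`(-1)^n = e(n / 2)` turns `e(k · F n)` into a combination of four polynomial phases, to which `c`
is orthogonal. The characters span a dense subspace of `C(𝕋^d, ℂ)`, and the `λ`-moment bound keeps
the averages of `|c n|` bounded, so orthogonality passes to uniform limits, i.e. to every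
continuous `f`. -/

open Topology Finset Matrix UnitAddTorus fwdDiff

def cesaroOrthogonal (c : ℕ → ℂ) : Submodule ℂ (ℕ → ℂ) where
  carrier := {u | Tendsto (fun N : ℕ => (1 / N : ℂ) * ∑ n ∈ Icc 1 N, c n * u n) atTop (𝓝 0)}
  zero_mem' := by simp
  add_mem' {u v} hu hv := by simpa [mul_add, sum_add_distrib] using hu.add hv
  smul_mem' z u hu := by simpa [mul_sum, mul_left_comm] using hu.const_mul z

theorem mem_cesaroOrthogonal {c u : ℕ → ℂ} :
    u ∈ cesaroOrthogonal c ↔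
      Tendsto (fun N : ℕ => (1 / N : ℂ) * ∑ n ∈ Icc 1 N, c n * u n) atTop (𝓝 0) :=
  Iff.rfl

theorem exists_avg_norm_le_of_tendsto_avg_rpow {c : ℕ → ℂ} {p K : ℝ} (hp : 1 ≤ p)
    (hK : Tendsto (fun N : ℕ => (1 / N : ℝ) * ∑ n ∈ Icc 1 N, ‖c n‖ ^ p) atTop (𝓝 K)) :
    ∃ C, ∀ N : ℕ, (1 / N : ℝ) * ∑ n ∈ Icc 1 N, ‖c n‖ ≤ C := by
  obtain ⟨B, hB⟩ := hK.bddAbove_range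
  refine ⟨1 + B, fun N => ?_⟩
  have hle : ∀ t : ℝ, 0 ≤ t → t ≤ 1 + t ^ p := fun t ht => by
    rcases le_total t 1 with h | h
    · linarith [Real.rpow_nonneg ht p]
    · linarith [Real.self_le_rpow_of_one_le h hp]
  calc (1 / N : ℝ) * ∑ n ∈ Icc 1 N, ‖c n‖
      ≤ (1 / N : ℝ) * ∑ n ∈ Icc 1 N, (1 + ‖c n‖ ^ p) := by
        gcongr with n; exact hle _ (norm_nonneg _)
    _ = N / N + (1 / N : ℝ) * ∑ n ∈ Icc 1 N, ‖c n‖ ^ p := by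
        rw [sum_add_distrib, mul_add]; simp [div_eq_inv_mul]
    _ ≤ 1 + B := add_le_add (div_self_le_one _) (hB ⟨N, rfl⟩)

theorem norm_avg_sub_le {c u v : ℕ → ℂ} {δ : ℝ} (huv : ∀ n, ‖u n - v n‖ ≤ δ) (N : ℕ) :
    ‖(1 / N : ℂ) * ∑ n ∈ Icc 1 N, c n * u n - (1 / N : ℂ) * ∑ n ∈ Icc 1 N, c n * v n‖ ≤
      ((1 / N : ℝ) * ∑ n ∈ Icc 1 N, ‖c n‖) * δ := by
  rw [← mul_sub, ← sum_sub_distrib, norm_mul, mul_assoc, sum_mul]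
  simp only [one_div, norm_inv, Complex.norm_natCast, ← mul_sub]
  gcongr
  refine (norm_sum_le _ _).trans (sum_le_sum fun n _ => ?_)
  rw [norm_mul]
  gcongr
  exact huv n

theorem mem_cesaroOrthogonal_of_forall_approx {c : ℕ → ℂ} {C : ℝ}
    (hC : ∀ N : ℕ, (1 / N : ℝ) * ∑ n ∈ Icc 1 N, ‖c n‖ ≤ C) {u : ℕ → ℂ}
    (hu : ∀ ε > 0, ∃ v ∈ cesaroOrthogonal c, ∀ n, ‖u n - v n‖ ≤ ε) :
    u ∈ cesaroOrthogonal c := by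
  have hC0 : 0 ≤ C := by simpa using hC 0
  rw [mem_cesaroOrthogonal, NormedAddGroup.tendsto_nhds_zero]
  intro ε hε
  obtain ⟨v, hv, huv⟩ := hu (ε / (2 * (C + 1))) (by positivity)
  filter_upwards [NormedAddGroup.tendsto_nhds_zero.1 hv (ε / 2) (half_pos hε)] with N hN
  have hCδ : C * (ε / (2 * (C + 1))) < ε / 2 := by
    rw [mul_div_assoc', div_lt_div_iff₀ (by positivity) two_pos]
    nlinarith
  calc _ ≤ ‖(1 / N : ℂ) * ∑ n ∈ Icc 1 N, c n * u n - (1 / N : ℂ) * ∑ n ∈ Icc 1 N, c n * v n‖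
        + ‖(1 / N : ℂ) * ∑ n ∈ Icc 1 N, c n * v n‖ := norm_le_norm_sub_add _ _
    _ < ε / 2 + ε / 2 := by
        refine add_lt_add (lt_of_le_of_lt ?_ hCδ) hN
        exact (norm_avg_sub_le huv N).trans (by gcongr; exact hC N)
    _ = ε := add_halves ε

theorem isClosed_setOf_comp_mem_cesaroOrthogonal {X : Type*} [TopologicalSpace X]
    [CompactSpace X] {c : ℕ → ℂ} {C : ℝ}
    (hC : ∀ N : ℕ, (1 / N : ℝ) * ∑ n ∈ Icc 1 N, ‖c n‖ ≤ C) (x : ℕ → X) :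
    IsClosed {g : C(X, ℂ) | (fun n => g (x n)) ∈ cesaroOrthogonal c} := by
  refine isClosed_of_closure_subset fun g hg => mem_cesaroOrthogonal_of_forall_approx hC ?_
  intro ε hε
  obtain ⟨g', hg', hgg'⟩ := Metric.mem_closure_iff.1 hg ε hε
  refine ⟨_, hg', fun n => ?_⟩
  rw [← dist_eq_norm]
  exact (ContinuousMap.dist_apply_le_dist (x n)).trans hgg'.le

theorem linearlyDisjoint_of_span_dense {X : Type*} [TopologicalSpace X] [CompactSpace X]
    {c : ℕ → ℂ} {C : ℝ} (hC : ∀ N : ℕ, (1 / N : ℝ) * ∑ n ∈ Icc 1 N, ‖c n‖ ≤ C)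
    (T : X → X) {s : Set C(X, ℂ)} (hs : (Submodule.span ℂ s).topologicalClosure = ⊤)
    (h : ∀ g ∈ s, ∀ x, (fun n => g (T^[n] x)) ∈ cesaroOrthogonal c) :
    LinearlyDisjoint c T := by
  intro f hf x
  let S : Submodule ℂ C(X, ℂ) := (cesaroOrthogonal c).comap
    ((LinearMap.funLeft ℂ ℂ fun n => T^[n] x) ∘ₗ ContinuousMap.coeFnLinearMap ℂ)
  have hS : Submodule.span ℂ s ≤ S := Submodule.span_le.2 fun g hg => h g hg x
  have hSclosed : IsClosed (S : Set C(X, ℂ)) :=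
    isClosed_setOf_comp_mem_cesaroOrthogonal hC fun n => T^[n] x
  have hS_top : ⊤ ≤ S := hs ▸ Submodule.topologicalClosure_minimal _ hS hSclosed
  have hfS : (⟨f, hf⟩ : C(X, ℂ)) ∈ S := hS_top Submodule.mem_top
  exact hfS

section ForwardDifference

variable {M : Type*} [AddCommMonoid M] (h : M)

theorem fwdDiff_iter_comp_addMonoidHom {G G' : Type*} [AddCommGroup G] [AddCommGroup G']
    (g : G →+ G') (f : M → G) (n : ℕ) : Δ_[h] ^[n] (g ∘ f) = g ∘ Δ_[h] ^[n] f :=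
  ((Function.Semiconj.iterate_right (f := (g ∘ ·)) (fun f => by
    ext y; simp [fwdDiff]) n) f).symm

theorem fwdDiff_iter_eq_zero_of_le {G : Type*} [AddCommGroup G] {f : M → G} {k j : ℕ}
    (hf : Δ_[h] ^[k] f = 0) (hkj : k ≤ j) : Δ_[h] ^[j] f = 0 := by
  obtain ⟨i, rfl⟩ := Nat.exists_eq_add_of_le hkj
  rw [add_comm, Function.iterate_add_apply, hf]
  exact Function.iterate_fixed (by ext; simp [fwdDiff]) i

theorem exists_natDegree_le_eval_eq_of_fwdDiff_iter_eq_zero {K : Type*} [Field K] [CharZero K]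
    {f : M → K} {k : ℕ} (hf : Δ_[h] ^[k + 1] f = 0) (y : M) :
    ∃ P : K[X], P.natDegree ≤ k ∧ ∀ n : ℕ, f (y + n • h) = P.eval (n : K) := by
  refine ⟨∑ j ∈ range (k + 1), C (Δ_[h] ^[j] f y / j.factorial) * descPochhammer K j,
    natDegree_sum_le_of_forall_le _ _ fun j hj => ?_, fun n => ?_⟩
  · exact (natDegree_C_mul_le _ _).trans
      ((descPochhammer_natDegree K j).trans_le (Nat.lt_succ_iff.1 (mem_range.1 hj)))
  · let u : ℕ → K := fun j => n.choose j * Δ_[h] ^[j] f y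
    have hu_n : ∀ j ≥ n + 1, u j = 0 := fun j hj => by simp [u, Nat.choose_eq_zero_of_lt hj]
    have hu_k : ∀ j ≥ k + 1, u j = 0 := fun j hj => by
      simp [u, fwdDiff_iter_eq_zero_of_le h hf hj]
    have hsum : ∑ j ∈ range (n + 1), u j = ∑ j ∈ range (k + 1), u j := by
      rcases le_total n k with hnk | hkn
      · exact (eventually_constant_sum hu_n (by omega)).symm
      · exact eventually_constant_sum hu_k (by omega)
    rw [shift_eq_sum_fwdDiff_iter h f n y]
    simp only [nsmul_eq_mul]
    rw [hsum, eval_finsetSum]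
    refine sum_congr rfl fun j _ => ?_
    dsimp only [u]
    rw [eval_mul, eval_C, Nat.cast_choose_eq_descPochhammer_div K]
    ring

theorem fwdDiff_iter_eq_pow_sub_one_apply {R V : Type*} [Semiring R] [AddCommGroup V] [Module R V]
    {L : Module.End R V} {G : M → V} (hG : ∀ y, G (y + h) = L (G y)) (n : ℕ) :
    Δ_[h] ^[n] G = fun y => ((L - 1) ^ n) (G y) := by
  induction n with
  | zero => rfl
  | succ n ih =>
    ext y
    rw [Function.iterate_succ_apply', ih, fwdDiff, hG, ← map_sub, pow_succ, Module.End.mul_apply,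
      LinearMap.sub_apply, Module.End.one_apply]

theorem fwdDiff_iter_eq_zero_of_affine {R V : Type*} [Semiring R] [AddCommGroup V] [Module R V]
    {L : Module.End R V} {b : V} {F : M → V} (hF : ∀ y, F (y + h) = L (F y) + b) {k : ℕ}
    (hL : (L - 1) ^ k = 0) : Δ_[h] ^[k + 1] F = 0 := by
  have hΔF : ∀ y, Δ_[h] F (y + h) = L (Δ_[h] F y) := fun y => by
    simp only [fwdDiff, hF, map_sub]
    abel
  rw [Function.iterate_succ_apply, fwdDiff_iter_eq_pow_sub_one_apply h hΔF, hL]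
  rfl

end ForwardDifference

def IsParityPolynomial (m : ℕ) (φ : ℕ → ℝ) : Prop :=
  ∃ P Q : ℝ[X], P.natDegree ≤ m ∧ Q.natDegree ≤ m ∧
    ∀ n : ℕ, φ n = if Even n then P.eval (n : ℝ) else Q.eval (n : ℝ)

theorem isParityPolynomial_of_fwdDiff_two_iter_eq_zero {m : ℕ} {φ : ℕ → ℝ}
    (hφ : Δ_[2] ^[m + 1] φ = 0) : IsParityPolynomial m φ := by
  obtain ⟨P, hP, hPφ⟩ := exists_natDegree_le_eval_eq_of_fwdDiff_iter_eq_zero 2 hφ 0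
  obtain ⟨Q, hQ, hQφ⟩ := exists_natDegree_le_eval_eq_of_fwdDiff_iter_eq_zero 2 hφ 1
  have hdeg : ∀ {R S : ℝ[X]}, R.natDegree ≤ m → S.natDegree ≤ 1 → (R.comp S).natDegree ≤ m :=
    fun hR hS => natDegree_comp_le.trans (by simpa using Nat.mul_le_mul hR hS)
  refine ⟨P.comp (C 2⁻¹ * X), Q.comp (C 2⁻¹ * (X - C 1)),
    hdeg hP ((natDegree_C_mul_le _ _).trans natDegree_X_le),
    hdeg hQ ((natDegree_C_mul_le _ _).trans (natDegree_X_sub_C_le 1)), fun n => ?_⟩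
  obtain ⟨j, rfl | rfl⟩ := Nat.even_or_odd' n
  · have hj : φ (2 * j) = P.eval (j : ℝ) := by rw [← hPφ, zero_add, smul_eq_mul, mul_comm]
    rw [if_pos (even_two_mul j), eval_comp, hj]
    congr 1
    simp only [eval_mul, eval_C, eval_X]
    push_cast
    ring
  · have hj : φ (2 * j + 1) = Q.eval (j : ℝ) := by rw [← hQφ, smul_eq_mul, mul_comm, add_comm]
    rw [if_neg (Nat.not_even_two_mul_add_one j), eval_comp, hj]
    congr 1
    simp only [eval_mul, eval_C, eval_X, eval_sub]
    push_cast
    ring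

open Complex in
theorem exp_two_pi_I_mul_add_half_mul_nat (t : ℝ) (n : ℕ) :
    exp (2 * Real.pi * I * ((t + 2⁻¹ * n : ℝ) : ℂ)) = (-1) ^ n * exp (2 * Real.pi * I * t) := by
  rw [← exp_pi_mul_I, ← exp_nat_mul, ← exp_add]
  congr 1
  push_cast
  ring

namespace HigherOrderOscillating

variable {c : ℕ → ℂ} {m : ℕ}

theorem exists_avg_norm_le (hc : HigherOrderOscillating c m) :
    ∃ C, ∀ N : ℕ, (1 / N : ℝ) * ∑ n ∈ Icc 1 N, ‖c n‖ ≤ C :=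
  let ⟨_, hp, _, hK⟩ := hc.1
  exists_avg_norm_le_of_tendsto_avg_rpow hp.le hK

theorem exp_poly_mem_cesaroOrthogonal (hc : HigherOrderOscillating c m) {P : ℝ[X]}
    (hP : P.natDegree ≤ m) :
    (fun n : ℕ => Complex.exp (2 * Real.pi * Complex.I * P.eval (n : ℝ))) ∈ cesaroOrthogonal c :=
  hc.2 P (natDegree_le_iff_degree_le.1 hP)

theorem exp_mem_cesaroOrthogonal_of_isParityPolynomial (hc : HigherOrderOscillating c m)
    (hm : 1 ≤ m) {φ : ℕ → ℝ} (hφ : IsParityPolynomial m φ) :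
    (fun n : ℕ => Complex.exp (2 * Real.pi * Complex.I * φ n)) ∈ cesaroOrthogonal c := by
  obtain ⟨P, Q, hP, hQ, hφ⟩ := hφ
  let e : ℝ[X] → ℕ → ℂ := fun R n => Complex.exp (2 * Real.pi * Complex.I * R.eval (n : ℝ))
  have he : ∀ {R : ℝ[X]}, R.natDegree ≤ m → e R ∈ cesaroOrthogonal c :=
    hc.exp_poly_mem_cesaroOrthogonal
  have hX : (C 2⁻¹ * X : ℝ[X]).natDegree ≤ m :=
    (natDegree_C_mul_le _ _).trans (natDegree_X_le.trans hm)
  have hadd : ∀ {R : ℝ[X]}, R.natDegree ≤ m → (R + C 2⁻¹ * X).natDegree ≤ m :=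
    fun hR => (natDegree_add_le _ _).trans (max_le hR hX)
  have hsplit : (fun n : ℕ => Complex.exp (2 * Real.pi * Complex.I * φ n)) =
      (2⁻¹ : ℂ) • (e P + e (P + C 2⁻¹ * X) + (e Q - e (Q + C 2⁻¹ * X))) := by
    funext n
    simp only [e, Pi.smul_apply, Pi.add_apply, Pi.sub_apply, smul_eq_mul, eval_add, eval_mul,
      eval_C, eval_X, exp_two_pi_I_mul_add_half_mul_nat, hφ n]
    rcases Nat.even_or_odd n with hn | hn
    · simp only [if_pos hn, hn.neg_one_pow]
      ring
    · simp only [if_neg (Nat.not_even_iff_odd.2 hn), hn.neg_one_pow]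
      ring
  rw [hsplit]
  exact Submodule.smul_mem _ _ (add_mem (add_mem (he hP) (he (hadd hP)))
    (sub_mem (he hQ) (he (hadd hQ))))

end HigherOrderOscillating

theorem Matrix.sq_sub_one_pow_eq_zero_of_charpoly {R n : Type*} [CommRing R] [Fintype n]
    [DecidableEq n] {A : Matrix n n R} {k : ℕ}
    (h : A.charpoly = (X - 1) ^ k ∨ A.charpoly = (X + 1) ^ k) : (A ^ 2 - 1) ^ k = 0 := by
  have hCH := aeval_self_charpoly A
  have hcomm : Commute (A - 1) (A + 1) := by
    unfold Commute SemiconjBy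
    noncomm_ring
  rw [show A ^ 2 - 1 = (A - 1) * (A + 1) by noncomm_ring, hcomm.mul_pow]
  rcases h with h | h <;> rw [h] at hCH <;> simp only [map_pow, map_sub, map_add, aeval_X,
    map_one] at hCH
  · rw [hCH, zero_mul]
  · rw [hCH, mul_zero]

theorem fwdDiff_two_iter_affine_iterate_eq_zero {R ι : Type*} [CommRing R] [Fintype ι]
    [DecidableEq ι] {B : Matrix ι ι R} {k : ℕ} (hB : (B ^ 2 - 1) ^ k = 0) (b v : ι → R) :
    Δ_[2] ^[k + 1] (fun n => (fun w => B *ᵥ w + b)^[n] v) = 0 := by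
  refine fwdDiff_iter_eq_zero_of_affine 2 (L := toLinAlgEquiv' (B ^ 2)) (b := B *ᵥ b + b)
    (fun n => ?_) ?_
  · rw [Function.iterate_succ_apply', Function.iterate_succ_apply']
    simp [mulVec_add, mulVec_mulVec, sq, add_assoc]
  · rw [← map_one toLinAlgEquiv', ← map_sub, ← map_pow, hB, map_zero]

theorem torusAffine_coe {d : ℕ} (A : Matrix (Fin d) (Fin d) ℤ) (b v : Fin d → ℝ) :
    torusAffine A (fun i => (b i : UnitAddCircle)) (fun i => (v i : UnitAddCircle)) =
      fun i => (((A.map (↑) *ᵥ v + b) i : ℝ) : UnitAddCircle) := by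
  ext i
  simp [torusAffine, mulVec, dotProduct]

theorem torusAffine_iterate_coe {d : ℕ} (A : Matrix (Fin d) (Fin d) ℤ) (b v : Fin d → ℝ)
    (n : ℕ) :
    (torusAffine A fun i => (b i : UnitAddCircle))^[n] (fun i => (v i : UnitAddCircle)) =
      fun i => (((fun w => A.map (↑) *ᵥ w + b)^[n] v i : ℝ) : UnitAddCircle) :=
  ((Function.Semiconj.iterate_right (f := fun (w : Fin d → ℝ) i => (w i : UnitAddCircle))
    (fun w => (torusAffine_coe A b w).symm) n) v).symm

theorem UnitAddTorus.mFourier_coe {ι : Type*} [Fintype ι] (k : ι → ℤ) (v : ι → ℝ) :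
    mFourier k (fun i => (v i : UnitAddCircle)) =
      Complex.exp (2 * Real.pi * Complex.I * ((fun i => (k i : ℝ)) ⬝ᵥ v : ℝ)) := by
  simp [mFourier, dotProduct, ← Complex.exp_sum, Finset.mul_sum, mul_assoc]

theorem HigherOrderOscillating.linearlyDisjoint_torusAffine {c : ℕ → ℂ} {m d : ℕ}
    (hc : HigherOrderOscillating c m) (hm : 1 ≤ m) (A : Matrix (Fin d) (Fin d) ℤ)
    (hA : (A ^ 2 - 1) ^ m = 0) (a : Torus d) : LinearlyDisjoint c (torusAffine A a) := by
  obtain ⟨C, hC⟩ := hc.exists_avg_norm_le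
  refine linearlyDisjoint_of_span_dense hC _ span_mFourier_closure_eq_top ?_
  rintro - ⟨k, rfl⟩ x
  obtain ⟨b, rfl⟩ := QuotientAddGroup.mk_surjective.comp_left a
  obtain ⟨v, rfl⟩ := QuotientAddGroup.mk_surjective.comp_left x
  have hB : ((A.map ((↑) : ℤ → ℝ)) ^ 2 - 1) ^ m = 0 := by
    simpa [map_pow, map_sub] using congrArg (Int.castRingHom ℝ).mapMatrix hA
  let ℓ : (Fin d → ℝ) →+ ℝ := AddMonoidHom.mk' ((fun i => (k i : ℝ)) ⬝ᵥ ·) (dotProduct_add _)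
  have hφ : Δ_[2] ^[m + 1] (ℓ ∘ fun n => (fun w => A.map (↑) *ᵥ w + b)^[n] v) = 0 := by
    rw [fwdDiff_iter_comp_addMonoidHom, fwdDiff_two_iter_affine_iterate_eq_zero hB]
    ext; simp
  convert hc.exp_mem_cesaroOrthogonal_of_isParityPolynomial hm
    (isParityPolynomial_of_fwdDiff_two_iter_eq_zero hφ) using 2 with n
  exact (congrArg _ (torusAffine_iterate_coe A b v n)).trans (mFourier_coe k _)

theorem higherOrderOscillating_linearlyDisjoint_affineDistal_torus_general
    (d : ℕ) (hd : 2 ≤ d)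
    (c : ℕ → ℂ) (hc : HigherOrderOscillating c d)
    (A : Matrix (Fin d) (Fin d) ℤ)
    (hEig : A.charpoly = (X - 1) ^ d ∨ A.charpoly = (X + 1) ^ d)
    (a : Torus d) :
    LinearlyDisjoint c (torusAffine A a) :=
  hc.linearlyDisjoint_torusAffine (by omega) A (Matrix.sq_sub_one_pow_eq_zero_of_charpoly hEig) a

/-- For any `d ≥ 2`, any higher order oscillating sequence of order `d` (stronger version)
is linearly disjoint from every affine distal flow `T x = A x + a` on the `d`-torus, i.e.
`A ∈ GL(d,ℤ)` with all complex eigenvalues equal to 1 (charpoly `(X-1)^d`) or all equal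
to -1 (charpoly `(X+1)^d`), and `a ≠ 0`. -/
theorem higherOrderOscillating_linearlyDisjoint_affineDistal_torus
    (d : ℕ) (hd : 2 ≤ d)
    (c : ℕ → ℂ) (hc : HigherOrderOscillating c d)
    (A : Matrix (Fin d) (Fin d) ℤ) (hA : IsUnit A.det)
    (hEig : A.charpoly = (X - 1) ^ d ∨ A.charpoly = (X + 1) ^ d)
    (a : Torus d) (ha : a ≠ 0) :
    LinearlyDisjoint c (torusAffine A a) :=
  higherOrderOscillating_linearlyDisjoint_affineDistal_torus_general d hd c hc A hEig a
end
end

section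
/- Let A ∈ GL(2, ℤ) be a 2×2 integer matrix with determinant 1 whose only complex eigenvalue is 1 (equivalently, whose characteristic polynomial is (X-1)²). Then there exist a matrix P ∈ GL(2, ℤ) with det(P) = 1 and an integer t ∈ ℤ such that P⁻¹AP = [[1, t], [0, 1]]. -/
open Polynomial

/-!
Since `(X - 1)²` vanishes at `1`, `det (1 - A) = 0`, so `A` fixes a nonzero integer vector and,
after dividing by the gcd of its entries, a primitive one `v`. A primitive vector is the first
column of some `P ∈ SL(2, ℤ)` (Bézout), and then `P⁻¹ A P` fixes `e₀`: it is upper triangular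
with top-left entry `1`, and its determinant `det A = 1` forces the other diagonal entry to be `1`.
-/

namespace Matrix

theorem exists_isCoprime_mulVec_eq_zero {M : Matrix (Fin 2) (Fin 2) ℤ} (hM : M.det = 0) :
    ∃ v : Fin 2 → ℤ, IsCoprime (v 0) (v 1) ∧ M *ᵥ v = 0 := by
  obtain ⟨v, hv, hMv⟩ := exists_mulVec_eq_zero_iff.mpr hM
  have hgcd : 0 < Int.gcd (v 0) (v 1) := by
    refine Int.gcd_pos_iff.mpr ?_
    contrapose! hv
    ext i
    fin_cases i <;> simp [hv]
  obtain ⟨m, n, hmn, hm, hn⟩ := Int.exists_gcd_one hgcd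
  have hv_eq : v = (Int.gcd (v 0) (v 1) : ℤ) • ![m, n] := by
    ext i
    fin_cases i <;> simp [mul_comm, ← hm, ← hn]
  rw [hv_eq, mulVec_smul] at hMv
  exact ⟨![m, n], Int.isCoprime_iff_gcd_eq_one.mpr hmn,
    (smul_eq_zero.mp hMv).resolve_left (by positivity)⟩

theorem exists_det_eq_one_mulVec_single_eq {R : Type*} [CommRing R] {v : Fin 2 → R}
    (hv : IsCoprime (v 0) (v 1)) :
    ∃ P : Matrix (Fin 2) (Fin 2) R, P.det = 1 ∧ P *ᵥ Pi.single 0 1 = v := by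
  obtain ⟨x, y, hxy⟩ := hv
  refine ⟨!![v 0, -y; v 1, x], ?_, ?_⟩
  · rw [det_fin_two_of]
    linear_combination hxy
  · ext i
    fin_cases i <;> simp

theorem eq_of_mulVec_single_zero_eq_of_det_eq_one {R : Type*} [CommRing R]
    {B : Matrix (Fin 2) (Fin 2) R} (hfix : B *ᵥ Pi.single 0 1 = Pi.single 0 1)
    (hdet : B.det = 1) : B = !![1, B 0 1; 0, 1] := by
  rw [mulVec_single_one] at hfix
  have h00 : B 0 0 = 1 := by simpa using congrFun hfix 0
  have h10 : B 1 0 = 0 := by simpa using congrFun hfix 1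
  have h11 : B 1 1 = 1 := by simpa [det_fin_two, h00, h10] using hdet
  ext i j
  fin_cases i <;> fin_cases j <;> simp [h00, h10, h11]

end Matrix

open Matrix

/-- Every `A ∈ GL(2,ℤ)` with `det A = 1` whose only complex eigenvalue is 1 (equivalently,
whose characteristic polynomial is `(X-1)²`) is conjugate, by some `P ∈ GL(2,ℤ)` with
`det P = 1`, to `[[1, t], [0, 1]]` for some integer `t`. -/
theorem parabolic_matrix_conjugate_to_unipotent_upper_triangular
    (A : Matrix (Fin 2) (Fin 2) ℤ) (hdet : A.det = 1)
    (hchar : A.charpoly = (X - 1) ^ 2) :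
    ∃ P : Matrix (Fin 2) (Fin 2) ℤ, P.det = 1 ∧
      ∃ t : ℤ, P⁻¹ * A * P = !![1, t; 0, 1] := by
  have hsing : (1 - A).det = 0 := by
    simpa [hchar] using (eval_charpoly A 1).symm
  obtain ⟨v, hv, hAv⟩ := exists_isCoprime_mulVec_eq_zero hsing
  rw [sub_mulVec, one_mulVec, sub_eq_zero] at hAv
  obtain ⟨P, hP, hPv⟩ := exists_det_eq_one_mulVec_single_eq hv
  have hPdet : IsUnit P.det := hP ▸ isUnit_one
  refine ⟨P, hP, _, eq_of_mulVec_single_zero_eq_of_det_eq_one ?_ ?_⟩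
  · rw [← mulVec_mulVec, ← mulVec_mulVec, hPv, ← hAv, ← hPv, mulVec_mulVec,
      nonsing_inv_mul P hPdet, one_mulVec]
  · rw [det_conj' ((isUnit_iff_isUnit_det P).mpr hPdet), hdet]
end

section
/- Let d ≥ 3 and let A ∈ GL(d, ℤ) with det(A) = 1 be a matrix all of whose complex eigenvalues equal 1 (characteristic polynomial (X-1)^d). Then there exists P ∈ GL(d, ℤ) with det(P) = 1 such that P⁻¹AP has block form [[1, b], [0, A₁]], where b ∈ ℤ^{d-1} is a row vector, the first column of P⁻¹AP is the standard basis vector e₁, and A₁ is a (d-1)×(d-1) integer matrix with det(A₁) = 1 all of whose complex eigenvalues equal 1. -/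
/-!
Since `det (1 - A) = χ_A(1) = 0`, the matrix `A` fixes a nonzero integer vector, and dividing it
by the gcd of its entries gives a fixed vector `w` that is primitive (`c ⬝ᵥ w = 1` for some `c`,
by Bézout). Over a PID such a vector extends to a basis, so it is the first column of a unimodular
matrix; dividing that column by the determinant yields `P` with `det P = 1` whose first column is
still fixed by `A`. Then `P⁻¹ A P` has first column `e₁`, and expanding the characteristic
polynomial along this column gives `χ_{A₁} = (X - 1)^d`, whence also `det A₁ = 1`.
-/

open Polynomial Matrix

theorem Module.exists_basis_apply_zero_eq {R M : Type*} [CommRing R] [IsDomain R]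
    [IsPrincipalIdealRing R] [AddCommGroup M] [Module R M] [Module.Free R M] [Module.Finite R M]
    {n : ℕ} (hM : Module.finrank R M = n + 1) (φ : M →ₗ[R] R) {w : M} (hw : φ w = 1) :
    ∃ b : Basis (Fin (n + 1)) R M, b 0 = w := by
  have hφ : Function.Surjective φ := fun t => ⟨t • w, by simp [hw]⟩
  have hker : Module.finrank R (LinearMap.ker φ) = n := by
    have := (LinearMap.ker φ).finrank_quotient_add_finrank
    rw [(φ.quotKerEquivOfSurjective hφ).finrank_eq, Module.finrank_self, hM] at this
    omega
  have hli : ∀ c : R, ∀ x ∈ LinearMap.ker φ, c • w + x = 0 → c = 0 := fun c x hx h => by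
    simpa [hw, LinearMap.mem_ker.mp hx] using congrArg φ h
  have hsp : ∀ z : M, ∃ c : R, z + c • w ∈ LinearMap.ker φ := fun z => ⟨-φ z, by simp [hw]⟩
  exact ⟨Basis.mkFinCons w (Module.finBasisOfFinrankEq R _ hker) hli hsp,
    by simp [Basis.coe_mkFinCons]⟩

namespace Matrix

variable {R : Type*} [CommRing R]

theorem charmatrix_submatrix {m n : Type*} [Fintype m] [DecidableEq m] [Fintype n]
    [DecidableEq n] (M : Matrix n n R) {e : m → n} (he : Function.Injective e) :
    (charmatrix M).submatrix e e = charmatrix (M.submatrix e e) := by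
  ext i j : 1
  simp [charmatrix_apply, diagonal_apply, he.eq_iff]

theorem det_eq_mul_det_submatrix_succ_of_col_zero {n : ℕ}
    (M : Matrix (Fin (n + 1)) (Fin (n + 1)) R) (h : ∀ i ≠ 0, M i 0 = 0) :
    M.det = M 0 0 * (M.submatrix Fin.succ Fin.succ).det := by
  rw [det_succ_column_zero, Fin.sum_univ_succ, Fintype.sum_eq_zero _ fun i => by
    simp [h i.succ (Fin.succ_ne_zero i)]]
  simp

theorem charpoly_eq_mul_charpoly_submatrix_succ_of_col_zero {n : ℕ}
    (M : Matrix (Fin (n + 1)) (Fin (n + 1)) R) (h : ∀ i ≠ 0, M i 0 = 0) :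
    M.charpoly = (X - C (M 0 0)) * (M.submatrix Fin.succ Fin.succ).charpoly := by
  have hcol : ∀ i ≠ 0, charmatrix M i 0 = 0 := fun i hi => by
    simp [charmatrix_apply_ne _ _ _ hi, h i hi]
  rw [charpoly, det_eq_mul_det_submatrix_succ_of_col_zero _ hcol, charmatrix_apply_eq,
    charmatrix_submatrix _ (Fin.succ_injective _), charpoly]

theorem det_eq_one_of_charpoly_eq_X_sub_one_pow {n : Type*} [Fintype n] [DecidableEq n]
    {M : Matrix n n R} (h : M.charpoly = (X - 1) ^ Fintype.card n) : M.det = 1 := by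
  rw [det_eq_sign_charpoly_coeff, h, coeff_zero_eq_eval_zero]
  simp [← mul_pow]

theorem inv_mul_mul_mulVec_eq_self {n : Type*} [Fintype n] [DecidableEq n]
    {P A : Matrix n n R} (hP : IsUnit P.det) {v : n → R} (h : A *ᵥ (P *ᵥ v) = P *ᵥ v) :
    (P⁻¹ * A * P) *ᵥ v = v := by
  rw [← mulVec_mulVec, ← mulVec_mulVec, h, mulVec_mulVec, nonsing_inv_mul _ hP, one_mulVec]

theorem charpoly_inv_mul_mul {n : Type*} [Fintype n] [DecidableEq n] {P : Matrix n n R}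
    (hP : IsUnit P.det) (A : Matrix n n R) : (P⁻¹ * A * P).charpoly = A.charpoly :=
  charpoly_units_conj' (nonsingInvUnit P hP) A

variable [IsDomain R]

theorem exists_mulVec_eq_zero_dotProduct_eq_one [IsBezout R] [NormalizedGCDMonoid R]
    {n : Type*} [Fintype n] [DecidableEq n] {M : Matrix n n R} (hM : M.det = 0) :
    ∃ w c : n → R, M *ᵥ w = 0 ∧ c ⬝ᵥ w = 1 := by
  obtain ⟨v, hv0, hMv⟩ := exists_mulVec_eq_zero_iff.mpr hM
  obtain ⟨c, hc⟩ := Finset.univ.gcd_eq_sum_mul v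
  set g := Finset.univ.gcd v
  have hg : g ≠ 0 := fun h =>
    hv0 (funext fun i => Finset.gcd_eq_zero_iff.mp h i (Finset.mem_univ i))
  choose w hw using fun i => Finset.gcd_dvd (s := Finset.univ) (f := v) (Finset.mem_univ i)
  have hvw : v = g • w := funext hw
  refine ⟨w, c, ?_, ?_⟩
  · rw [hvw, mulVec_smul] at hMv
    exact (smul_eq_zero.mp hMv).resolve_left hg
  · apply mul_left_cancel₀ hg
    rw [mul_one, ← smul_eq_mul, ← dotProduct_smul, ← hvw, dotProduct_comm]
    exact hc.symm

theorem exists_det_eq_one_col_zero_eq_smul [IsPrincipalIdealRing R] {n : ℕ}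
    {w c : Fin (n + 1) → R} (hw : c ⬝ᵥ w = 1) :
    ∃ (P : Matrix (Fin (n + 1)) (Fin (n + 1)) R) (u : Rˣ), P.det = 1 ∧ P.col 0 = u • w := by
  obtain ⟨b, hb⟩ :=
    Module.exists_basis_apply_zero_eq (n := n) (by simp) (dotProductEquiv R _ c) hw
  set Q := (Pi.basisFun R (Fin (n + 1))).toMatrix b
  have hQ : Q.col 0 = w := by
    ext i
    simp [Q, Module.Basis.toMatrix_apply, hb]
  obtain ⟨u, hu⟩ : IsUnit Q.det := IsUnit.of_mul_eq_one _ (by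
    rw [← det_mul, Module.Basis.toMatrix_mul_toMatrix_flip, det_one])
  refine ⟨Q.updateCol 0 (u⁻¹ • w), u⁻¹, ?_, ?_⟩
  · rw [Units.smul_def, det_updateCol_smul, ← hQ,
      show Q.updateCol 0 (Q.col 0) = Q from updateCol_eq_self Q 0, ← hu, Units.inv_mul]
  · ext i
    simp

end Matrix

theorem unipotent_matrix_block_triangular_step_general
    (d : ℕ)
    (A : Matrix (Fin (d + 1)) (Fin (d + 1)) ℤ)
    (hchar : A.charpoly = (X - 1) ^ (d + 1)) :
    ∃ P : Matrix (Fin (d + 1)) (Fin (d + 1)) ℤ, P.det = 1 ∧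
      (P⁻¹ * A * P) 0 0 = 1 ∧
      (∀ i : Fin (d + 1), i ≠ 0 → (P⁻¹ * A * P) i 0 = 0) ∧
      ∃ (b : Fin d → ℤ) (A₁ : Matrix (Fin d) (Fin d) ℤ),
        (∀ j : Fin d, b j = (P⁻¹ * A * P) 0 j.succ) ∧
        A₁.det = 1 ∧ A₁.charpoly = (X - 1) ^ d ∧
        ∀ i j : Fin d, A₁ i j = (P⁻¹ * A * P) i.succ j.succ := by
  have hsing : (1 - A).det = 0 := by simpa [hchar] using (eval_charpoly A 1).symm
  obtain ⟨w, c, hw, hcw⟩ := exists_mulVec_eq_zero_dotProduct_eq_one hsing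
  have hAw : A *ᵥ w = w := by rw [sub_mulVec, one_mulVec, sub_eq_zero] at hw; exact hw.symm
  obtain ⟨P, u, hP, hPw⟩ := exists_det_eq_one_col_zero_eq_smul hcw
  have hPunit : IsUnit P.det := hP ▸ isUnit_one
  set B := P⁻¹ * A * P
  have hB : B *ᵥ Pi.single 0 1 = Pi.single 0 1 := inv_mul_mul_mulVec_eq_self hPunit <| by
    rw [mulVec_single_one, hPw, Units.smul_def, mulVec_smul, hAw]
  have hB0 : ∀ i, B i 0 = (Pi.single 0 1 : Fin (d + 1) → ℤ) i := fun i => by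
    simpa using congrFun hB i
  have hBi0 : ∀ i ≠ 0, B i 0 = 0 := fun i hi => by simp [hB0, hi]
  have hA₁char : (B.submatrix Fin.succ Fin.succ).charpoly = (X - 1) ^ d := by
    have h := charpoly_eq_mul_charpoly_submatrix_succ_of_col_zero B hBi0
    rw [charpoly_inv_mul_mul hPunit, hchar, hB0, Pi.single_eq_same, map_one, pow_succ'] at h
    exact (mul_left_cancel₀ (by simpa using X_sub_C_ne_zero (1 : ℤ)) h).symm
  refine ⟨P, hP, (hB0 0).trans (Pi.single_eq_same _ _), hBi0, fun j => B 0 j.succ,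
    B.submatrix Fin.succ Fin.succ, fun _ => rfl,
    det_eq_one_of_charpoly_eq_X_sub_one_pow (by simpa using hA₁char), hA₁char, fun _ _ => rfl⟩

/-- Let `A` be a `(d+1) × (d+1)` integer matrix with `d + 1 ≥ 3`, `det A = 1`, and all
complex eigenvalues equal to 1 (characteristic polynomial `(X-1)^(d+1)`). Then there is
`P ∈ GL(d+1, ℤ)` with `det P = 1` such that `B = P⁻¹ A P` has block form `[[1, b], [0, A₁]]`:
its first column is the standard basis vector `e₁` (so `B 0 0 = 1` and `B i 0 = 0` for
`i ≠ 0`), and the lower-right `d × d` submatrix `A₁` is an integer matrix with `det A₁ = 1`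
all of whose complex eigenvalues equal 1 (characteristic polynomial `(X-1)^d`); the first-row
entries `B 0 j` for `j ≥ 1` form the integer row vector `b`. -/
theorem unipotent_matrix_block_triangular_step
    (d : ℕ) (hd : 2 ≤ d)
    (A : Matrix (Fin (d + 1)) (Fin (d + 1)) ℤ) (hdet : A.det = 1)
    (hchar : A.charpoly = (X - 1) ^ (d + 1)) :
    ∃ P : Matrix (Fin (d + 1)) (Fin (d + 1)) ℤ, P.det = 1 ∧
      (P⁻¹ * A * P) 0 0 = 1 ∧
      (∀ i : Fin (d + 1), i ≠ 0 → (P⁻¹ * A * P) i 0 = 0) ∧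
      ∃ (b : Fin d → ℤ) (A₁ : Matrix (Fin d) (Fin d) ℤ),
        (∀ j : Fin d, b j = (P⁻¹ * A * P) 0 j.succ) ∧
        A₁.det = 1 ∧ A₁.charpoly = (X - 1) ^ d ∧
        ∀ i j : Fin d, A₁ i j = (P⁻¹ * A * P) i.succ j.succ :=
  unipotent_matrix_block_triangular_step_general d A hchar
end
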